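/- Let X be a real or complex normed linear space and 1 ≤ p < ∞. If a series ∑_{n=0}^∞ u_n with terms in X is (C,1) summable in X to some S ∈ X and satisfies ∑_{n=1}^∞ n^{p-1} ‖u_n‖^p < ∞, then the series converges in X (to S). -/

import Mathlib

open Filter Finset Topology

/-!
Abel summation gives `S_n - σ_n = (n+1)⁻¹ ∑_{k ≤ n} k u_k`, so it suffices that the Cesàro means of
`x_k = k ‖u_k‖` tend to `0`. By the power-mean inequality the `p`-th power of such a mean is at most
the Cesàro mean of `x_k ^ p = k · (k ^ (p-1) ‖u_k‖ ^ p)`, and this tends to `0` by Kronecker's lemma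
because `∑ k ^ (p-1) ‖u_k‖ ^ p` converges.
-/

noncomputable def cesaroMean {E : Type*} [AddCommGroup E] [Module ℝ E] (x : ℕ → E) (n : ℕ) : E :=
  ((n : ℝ) + 1)⁻¹ • ∑ k ∈ range (n + 1), x k

theorem sum_range_partialSums_add_sum_range_nsmul {M : Type*} [AddCommMonoid M] (u : ℕ → M)
    (n : ℕ) :
    ∑ i ∈ range (n + 1), ∑ k ∈ range (i + 1), u k + ∑ k ∈ range (n + 1), k • u k =
      (n + 1) • ∑ k ∈ range (n + 1), u k := by
  induction n with
  | zero => simp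
  | succ n ih =>
    rw [sum_range_succ _ (n + 1), sum_range_succ (fun k => k • u k), sum_range_succ u (n + 1),
      add_add_add_comm, ih, nsmul_add, succ_nsmul _ (n + 1), succ_nsmul (u _) (n + 1)]
    abel

theorem sum_range_sub_cesaroMean_partialSums {E : Type*} [AddCommGroup E] [Module ℝ E]
    (u : ℕ → E) (n : ℕ) :
    ∑ k ∈ range (n + 1), u k - cesaroMean (fun i => ∑ k ∈ range (i + 1), u k) n =
      cesaroMean (fun k => (k : ℝ) • u k) n := by
  have h := sum_range_partialSums_add_sum_range_nsmul u n
  simp only [← Nat.cast_smul_eq_nsmul ℝ, Nat.cast_add, Nat.cast_one] at h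
  rw [cesaroMean, cesaroMean, sub_eq_iff_eq_add', ← smul_add, h, inv_smul_smul₀ (by positivity)]

theorem norm_cesaroMean_le {E : Type*} [SeminormedAddCommGroup E] [NormedSpace ℝ E]
    (x : ℕ → E) (n : ℕ) : ‖cesaroMean x n‖ ≤ cesaroMean (fun k => ‖x k‖) n := by
  rw [cesaroMean, cesaroMean, norm_smul, Real.norm_of_nonneg (by positivity), smul_eq_mul]
  gcongr
  exact norm_sum_le _ _

/-- Kronecker's lemma. The `k`-th term `k c_k / (n+1)` of the mean tends to `0` as `n → ∞` and is
dominated by `|c_k|`, so dominated convergence for series applies. -/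
theorem Summable.tendsto_cesaroMean_natCast_mul {c : ℕ → ℝ} (hc : Summable c) :
    Tendsto (cesaroMean fun k => k * c k) atTop (𝓝 0) := by
  set f : ℕ → ℕ → ℝ := fun n =>
    (range (n + 1) : Set ℕ).indicator fun k => ((n : ℝ) + 1)⁻¹ * (k * c k) with hf
  have hf_lim (k : ℕ) : Tendsto (f · k) atTop (𝓝 0) := by
    have hlim : Tendsto (fun n : ℕ => ((n : ℝ) + 1)⁻¹ * (k * c k)) atTop (𝓝 0) := by
      simpa using (tendsto_one_div_add_atTop_nhds_zero_nat (𝕜 := ℝ)).mul_const ((k : ℝ) * c k)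
    refine hlim.congr' ?_
    filter_upwards [eventually_ge_atTop k] with n hn
    simp only [hf]
    rw [Set.indicator_of_mem (by simpa [Nat.lt_succ_iff] using hn)]
  have hf_le (n k : ℕ) : ‖f n k‖ ≤ |c k| := by
    by_cases hk : k ∈ range (n + 1)
    · simp only [hf]
      rw [Set.indicator_of_mem (mem_coe.2 hk), ← mul_assoc, norm_mul, ← Real.norm_eq_abs]
      refine mul_le_of_le_one_left (norm_nonneg _) ?_
      rw [Real.norm_of_nonneg (by positivity), inv_mul_le_one₀ (by positivity)]
      exact_mod_cast (mem_range.1 hk).le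
    · simp only [hf]
      rw [Set.indicator_of_notMem (mem_coe.not.2 hk), norm_zero]
      exact abs_nonneg _
  have h := tendsto_tsum_of_dominated_convergence hc.abs hf_lim (.of_forall hf_le)
  rw [tsum_zero] at h
  refine h.congr fun n => ?_
  rw [cesaroMean, smul_eq_mul, mul_sum, sum_eq_tsum_indicator]

theorem tendsto_cesaroMean_zero_of_tendsto_cesaroMean_rpow {x : ℕ → ℝ} (hx : ∀ k, 0 ≤ x k)
    {p : ℝ} (hp : 1 ≤ p) (h : Tendsto (cesaroMean fun k => x k ^ p) atTop (𝓝 0)) :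
    Tendsto (cesaroMean x) atTop (𝓝 0) := by
  have hroot : Tendsto (fun n => cesaroMean (fun k => x k ^ p) n ^ (1 / p)) atTop (𝓝 0) := by
    have := h.rpow_const (p := 1 / p) (Or.inr (by positivity))
    rwa [Real.zero_rpow (one_div_pos.2 (by linarith : (0 : ℝ) < p)).ne'] at this
  refine squeeze_zero (fun n => ?_) (fun n => ?_) hroot
  · have := sum_nonneg fun k (_ : k ∈ range (n + 1)) => hx k
    unfold cesaroMean
    positivity
  · have hw : ∑ _k ∈ range (n + 1), ((n : ℝ) + 1)⁻¹ = 1 := by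
      rw [sum_const, card_range, nsmul_eq_mul, Nat.cast_succ, mul_inv_cancel₀ (by positivity)]
    simpa only [cesaroMean, smul_eq_mul, mul_sum] using
      Real.arith_mean_le_rpow_mean (range (n + 1)) (fun _ => ((n : ℝ) + 1)⁻¹) x
        (fun _ _ => by positivity) hw (fun k _ => hx k) hp

theorem tendsto_cesaroMean_natCast_mul_of_summable_rpow {a : ℕ → ℝ} (ha : ∀ k, 0 ≤ a k) {p : ℝ}
    (hp : 1 ≤ p) (h : Summable fun k : ℕ => (k : ℝ) ^ (p - 1) * a k ^ p) :
    Tendsto (cesaroMean fun k => k * a k) atTop (𝓝 0) := by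
  refine tendsto_cesaroMean_zero_of_tendsto_cesaroMean_rpow
    (fun k => mul_nonneg k.cast_nonneg (ha k)) hp ?_
  have hpow (k : ℕ) : ((k : ℝ) * a k) ^ p = k * ((k : ℝ) ^ (p - 1) * a k ^ p) := by
    rw [Real.mul_rpow k.cast_nonneg (ha k), ← mul_assoc,
      ← Real.rpow_one_add' k.cast_nonneg (by linarith : (0 : ℝ) < 1 + (p - 1)).ne',
      add_sub_cancel]
  simpa only [hpow] using h.tendsto_cesaroMean_natCast_mul

/-- **Hardy–Littlewood Tauberian theorem in a normed space** (Corollary 2). Let `1 ≤ p < ∞`.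
If a series `∑ u_n` in a real or complex normed linear space `X` is `(C,1)` summable to
`S ∈ X` and satisfies `∑_{n=1}^∞ n^{p-1} ‖u_n‖^p < ∞`, then the series converges in `X`
to `S`. -/
theorem tauberian_cesaro_hardy_littlewood
    {X : Type*} [NormedAddCommGroup X] [NormedSpace ℝ X]
    (u : ℕ → X) (S : X) (p : ℝ) (hp : 1 ≤ p)
    (hC1 : Tendsto (fun n : ℕ =>
        ((n : ℝ) + 1)⁻¹ • ∑ i ∈ range (n + 1), ∑ k ∈ range (i + 1), u k)
      atTop (𝓝 S))
    (hHL : Summable fun n : ℕ => ((n : ℝ) + 1) ^ (p - 1) * ‖u (n + 1)‖ ^ p) :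
    Tendsto (fun n : ℕ => ∑ k ∈ range (n + 1), u k) atTop (𝓝 S) := by
  have hsum : Summable fun k : ℕ => (k : ℝ) ^ (p - 1) * ‖u k‖ ^ p :=
    (summable_nat_add_iff 1).1 (by exact_mod_cast hHL)
  have hgap : Tendsto (fun n => ∑ k ∈ range (n + 1), u k -
      cesaroMean (fun i => ∑ k ∈ range (i + 1), u k) n) atTop (𝓝 0) := by
    refine squeeze_zero_norm (fun n => ?_)
      (tendsto_cesaroMean_natCast_mul_of_summable_rpow (fun k => norm_nonneg (u k)) hp hsum)
    rw [sum_range_sub_cesaroMean_partialSums]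
    simpa [norm_smul] using norm_cesaroMean_le (fun k => (k : ℝ) • u k) n
  have h := hgap.add hC1
  rw [zero_add] at h
  exact h.congr fun n => sub_add_cancel _ _
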